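/- Let p_s, p_e ≥ 0 with p_s + p_e ≤ 1 and let W be the substitution/erasure kernel. Let X be a random variable with finitely many values, Y a random variable taking finitely many values in lists over {0,1}, and Y^(3) a random variable taking values in lists over {0,1,★} with |Y^(3)| = |Y| pointwise, such that P(Y^(3)=y′ | X=x, Y=y) = ∏_{i=1}^{|y|} W(y_i, y′_i) whenever P(X=x, Y=y) > 0 and |y′| = |y|. Then I(X; Y^(3)) ≥ I(X; Y) − E[|Y|] · [ H(p_s, p_e, 1−p_s−p_e) + log₂((1−p_e)² + 2p_e²) ], where H(p_s, p_e, 1−p_s−p_e) = −p_s log₂ p_s − p_e log₂ p_e − (1−p_s−p_e) log₂(1−p_s−p_e). -/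

import Mathlib

open scoped BigOperators
open Classical

noncomputable section

/-- A finite probability space: a probability mass function on a finite type. -/
structure FinProb (Ω : Type*) [Fintype Ω] where
  p : Ω → ℝ
  nonneg : ∀ ω, 0 ≤ p ω
  sum_one : ∑ ω, p ω = 1

variable {Ω : Type*} [Fintype Ω]

/-- Probability of an event. -/
def pr (μ : FinProb Ω) (E : Ω → Prop) : ℝ :=
  ∑ ω, if E ω then μ.p ω else 0

/-- Shannon entropy (base 2) of a random variable with finitely many values. -/
def entropy {S : Type*} (μ : FinProb Ω) (U : Ω → S) : ℝ :=
  -∑ u ∈ Finset.univ.image U,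
    pr μ (fun ω => U ω = u) * Real.logb 2 (pr μ (fun ω => U ω = u))

/-- Conditional Shannon entropy `H(U | V)`. -/
def condEntropy {S T : Type*} (μ : FinProb Ω) (U : Ω → S) (V : Ω → T) : ℝ :=
  ∑ v ∈ (Finset.univ.image V).filter (fun v => 0 < pr μ (fun ω => V ω = v)),
    pr μ (fun ω => V ω = v) *
      (-∑ u ∈ Finset.univ.image U,
        (pr μ (fun ω => U ω = u ∧ V ω = v) / pr μ (fun ω => V ω = v)) *
          Real.logb 2 (pr μ (fun ω => U ω = u ∧ V ω = v) / pr μ (fun ω => V ω = v)))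

/-- Mutual information `I(U;V) = H(U) - H(U|V)`. -/
def mutualInfo {S T : Type*} (μ : FinProb Ω) (U : Ω → S) (V : Ω → T) : ℝ :=
  entropy μ U - condEntropy μ U V

/-- Expected length of a list-valued random variable. -/
def expLen {A : Type*} (μ : FinProb Ω) (Y : Ω → List A) : ℝ :=
  ∑ ω, μ.p ω * (Y ω).length

/-- The substitution/erasure kernel on input alphabet `{0,1}` (modeled as `Bool`)
and output alphabet `{0,1,★}` (modeled as `Option Bool`, with `none` the erasure `★`):
`W b b = 1 - ps - pe`, `W b (1-b) = ps`, `W b ★ = pe`. -/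
def subErsKernel (ps pe : ℝ) : Bool → Option Bool → ℝ :=
  fun b c => match c with
  | none => pe
  | some c' => if c' = b then 1 - ps - pe else ps


/-!
For any random variables, `H(X | Z) ≤ H(X | Y) + H(Y | Z)` (Gibbs' inequality applied to the
ratio `P(X,Y) P(Y,Z) / (P(X,Z) P(Y))`), so it suffices to bound `H(Y | Y⁽³⁾)`, and only the
channel law of `Y⁽³⁾` given `Y` matters. Pointwise
`log (P(Y⁽³⁾) / P(Y,Y⁽³⁾)) = -log Wⁿ(Y⁽³⁾ | Y) + log (P(Y⁽³⁾) / P(Y))`.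
The channel acts letter by letter, so the first term averages to `E|Y| · H(p_s, p_e, 1-p_s-p_e)`.
For the second, with `C = ∑ c, W(b,c) (W(0,c) + W(1,c)) = (1-p_e)² + 2p_e²` (independent of `b`),
Gibbs' inequality gives `E log (P(Y⁽³⁾) / (P(Y) Cⁿ)) ≤ 0`, where `n = |Y|`, because
`∑_{y,z} P(Y⁽³⁾ = z) Wⁿ(z | y) / Cⁿ = E[C^(-|Y|) ∑_z Wⁿ(z | Y) ∑_y Wⁿ(z | y)] ≤ 1`.
-/

open Finset

section Probability

variable (μ : FinProb Ω)

lemma pr_nonneg (E : Ω → Prop) : 0 ≤ pr μ E :=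
  sum_nonneg fun ω _ => by split_ifs <;> simp [μ.nonneg ω]

lemma pr_mono {E F : Ω → Prop} (h : ∀ ω, E ω → F ω) : pr μ E ≤ pr μ F :=
  sum_le_sum fun ω _ => by
    by_cases hE : E ω
    · simp [hE, h ω hE]
    · by_cases hF : F ω <;> simp [hE, hF, μ.nonneg ω]

lemma pr_congr {E F : Ω → Prop} (h : ∀ ω, E ω ↔ F ω) : pr μ E = pr μ F := by
  simp only [pr, h]

lemma pr_pos {E : Ω → Prop} {ω : Ω} (hω : 0 < μ.p ω) (h : E ω) : 0 < pr μ E := by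
  refine hω.trans_le ?_
  have := single_le_sum (f := fun ω' => if E ω' then μ.p ω' else 0)
    (fun ω' _ => by split_ifs <;> simp [μ.nonneg ω']) (mem_univ ω)
  simpa [pr, h] using this

lemma pr_eq_zero {E : Ω → Prop} (h : ∀ ω, ¬E ω) : pr μ E = 0 := by
  simp [pr, h]

lemma sum_pr_mul {T : Type*} (V : Ω → T) {s : Finset T} (hs : ∀ ω, 0 < μ.p ω → V ω ∈ s)
    (F : T → ℝ) : ∑ t ∈ s, pr μ (fun ω => V ω = t) * F t = ∑ ω, μ.p ω * F (V ω) := by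
  simp only [pr, sum_mul, ite_mul, zero_mul]
  rw [sum_comm]
  refine sum_congr rfl fun ω _ => ?_
  rw [sum_ite_eq]
  split_ifs with h
  · rfl
  · rcases (μ.nonneg ω).eq_or_lt with h0 | h0
    · simp [← h0]
    · exact absurd (hs ω h0) h

lemma sum_sum_pr_mul {T T' : Type*} (V : Ω → T) (W : Ω → T') {s : Finset T}
    {t : T → Finset T'} (hst : ∀ ω, 0 < μ.p ω → V ω ∈ s ∧ W ω ∈ t (V ω)) (F : T → T' → ℝ) :
    ∑ v ∈ s, ∑ w ∈ t v, pr μ (fun ω => W ω = w ∧ V ω = v) * F v w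
      = ∑ ω, μ.p ω * F (V ω) (W ω) := by
  rw [← sum_pr_mul μ (fun ω => (⟨V ω, W ω⟩ : Σ _ : T, T')) (s := s.sigma t)
    (fun ω hω => mem_sigma.2 (hst ω hω)) fun x => F x.1 x.2, sum_sigma]
  refine sum_congr rfl fun v _ => sum_congr rfl fun w _ => ?_
  congr 1
  exact pr_congr μ fun ω => by simp [and_comm]

lemma sum_pr_and {T : Type*} (E : Ω → Prop) (V : Ω → T) {s : Finset T}
    (hs : ∀ ω, 0 < μ.p ω → V ω ∈ s) :
    ∑ t ∈ s, pr μ (fun ω => E ω ∧ V ω = t) = pr μ E := by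
  simp only [pr]
  rw [sum_comm]
  refine sum_congr rfl fun ω _ => ?_
  by_cases hE : E ω
  · simp only [hE, true_and, if_true]
    rw [sum_ite_eq]
    split_ifs with h
    · rfl
    · rcases (μ.nonneg ω).eq_or_lt with h0 | h0
      · exact h0
      · exact absurd (hs ω h0) h
  · simp [hE]

lemma sum_mul_div_pr_le {T : Type*} (V : Ω → T) {s : Finset T}
    (hs : ∀ ω, 0 < μ.p ω → V ω ∈ s) (Q : T → ℝ) (hQ : ∀ t ∈ s, 0 ≤ Q t) :
    ∑ ω, μ.p ω * (Q (V ω) / pr μ (fun ω' => V ω' = V ω)) ≤ ∑ t ∈ s, Q t := by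
  rw [← sum_pr_mul μ V hs (fun t => Q t / pr μ (fun ω => V ω = t))]
  refine sum_le_sum fun t ht => ?_
  rcases (pr_nonneg μ (fun ω => V ω = t)).eq_or_lt with h0 | h0
  · rw [← h0, zero_mul]
    exact hQ t ht
  · rw [mul_div_cancel₀ _ h0.ne']

/-- Gibbs' inequality, via `log x ≤ x - 1`. -/
lemma sum_mul_logb_nonpos (g : Ω → ℝ) (hg : ∀ ω, 0 < μ.p ω → 0 < g ω)
    (hsum : ∑ ω, μ.p ω * g ω ≤ 1) : ∑ ω, μ.p ω * Real.logb 2 (g ω) ≤ 0 := by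
  have hlog2 : 0 < Real.log 2 := Real.log_pos one_lt_two
  have key : ∀ ω, μ.p ω * Real.logb 2 (g ω) ≤ μ.p ω * (g ω - 1) / Real.log 2 := by
    intro ω
    rcases (μ.nonneg ω).eq_or_lt with h0 | h0
    · simp [← h0]
    · rw [Real.logb, ← mul_div_assoc]
      gcongr
      exact Real.log_le_sub_one_of_pos (hg ω h0)
  calc ∑ ω, μ.p ω * Real.logb 2 (g ω)
      ≤ ∑ ω, μ.p ω * (g ω - 1) / Real.log 2 := sum_le_sum fun ω _ => key ω
    _ = (∑ ω, μ.p ω * g ω - 1) / Real.log 2 := by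
        rw [← sum_div]
        simp [mul_sub, sum_sub_distrib, μ.sum_one]
    _ ≤ 0 := div_nonpos_of_nonpos_of_nonneg (by linarith) hlog2.le

end Probability

section ConditionalEntropy

variable (μ : FinProb Ω)

lemma condEntropy_eq_sum {S T : Type*} (U : Ω → S) (V : Ω → T) :
    condEntropy μ U V = ∑ ω, μ.p ω * Real.logb 2
      (pr μ (fun ω' => V ω' = V ω) / pr μ (fun ω' => U ω' = U ω ∧ V ω' = V ω)) := by
  set G : T → ℝ := fun v => ∑ u ∈ univ.image U, pr μ (fun ω => U ω = u ∧ V ω = v) *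
    Real.logb 2 (pr μ (fun ω => V ω = v) / pr μ (fun ω => U ω = u ∧ V ω = v))
  have hG : ∀ v ∈ univ.image V, G v ≠ 0 → 0 < pr μ (fun ω => V ω = v) := by
    intro v _ hv
    refine (pr_nonneg μ _).lt_of_ne fun h0 => hv (sum_eq_zero fun u _ => ?_)
    rw [le_antisymm ((pr_mono μ fun ω h => h.2).trans h0.ge) (pr_nonneg μ _), zero_mul]
  refine Eq.trans ?_ ((sum_filter_of_ne hG).trans (sum_sum_pr_mul μ V U
    (fun ω _ => ⟨mem_image_of_mem V (mem_univ ω), mem_image_of_mem U (mem_univ ω)⟩)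
    fun v u => Real.logb 2 (pr μ (fun ω => V ω = v) / pr μ (fun ω => U ω = u ∧ V ω = v))))
  refine sum_congr rfl fun v hv => ?_
  have hv : pr μ (fun ω => V ω = v) ≠ 0 := (mem_filter.1 hv).2.ne'
  rw [mul_neg, mul_sum, ← sum_neg_distrib]
  refine sum_congr rfl fun u _ => ?_
  rw [← mul_assoc, mul_div_cancel₀ _ hv, ← inv_div, Real.logb_inv, mul_neg, neg_neg]

lemma sum_mul_pr_ratio_le_one {S T T' : Type*} (X : Ω → S) (Y : Ω → T) (Z : Ω → T') :
    ∑ ω, μ.p ω * (pr μ (fun ω' => X ω' = X ω ∧ Y ω' = Y ω)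
      * pr μ (fun ω' => Y ω' = Y ω ∧ Z ω' = Z ω)
      / (pr μ (fun ω' => X ω' = X ω ∧ Z ω' = Z ω) * pr μ (fun ω' => Y ω' = Y ω))) ≤ 1 := by
  set Q : (S × T) × T' → ℝ := fun v => pr μ (fun ω => X ω = v.1.1 ∧ Y ω = v.1.2)
    * pr μ (fun ω => Y ω = v.1.2 ∧ Z ω = v.2) / pr μ (fun ω => Y ω = v.1.2)
  have hQ : ∀ v, 0 ≤ Q v := fun v =>
    div_nonneg (mul_nonneg (pr_nonneg μ _) (pr_nonneg μ _)) (pr_nonneg μ _)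
  have hmem : ∀ ω, 0 < μ.p ω →
      ((X ω, Y ω), Z ω) ∈ (univ.image fun ω => (X ω, Y ω)) ×ˢ univ.image Z := fun ω _ =>
    mem_product.2 ⟨mem_image_of_mem _ (mem_univ ω), mem_image_of_mem _ (mem_univ ω)⟩
  -- the event `(X, Y, Z) = ·` is smaller than `(X, Z) = ·`
  have hle : ∀ ω, μ.p ω * (pr μ (fun ω' => X ω' = X ω ∧ Y ω' = Y ω)
      * pr μ (fun ω' => Y ω' = Y ω ∧ Z ω' = Z ω)
      / (pr μ (fun ω' => X ω' = X ω ∧ Z ω' = Z ω) * pr μ (fun ω' => Y ω' = Y ω)))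
      ≤ μ.p ω * (Q ((X ω, Y ω), Z ω)
        / pr μ (fun ω' => ((X ω', Y ω'), Z ω') = ((X ω, Y ω), Z ω))) := by
    intro ω
    rcases (μ.nonneg ω).eq_or_lt with h0 | h0
    · simp [← h0]
    refine mul_le_mul_of_nonneg_left ?_ h0.le
    rw [mul_comm (pr μ fun ω' => X ω' = X ω ∧ Z ω' = Z ω), ← div_div]
    exact div_le_div_of_nonneg_left (hQ ((X ω, Y ω), Z ω)) (pr_pos μ h0 rfl)
      (pr_mono μ fun ω' h => by simp_all)
  refine (sum_le_sum fun ω _ => hle ω).trans <|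
    (sum_mul_div_pr_le μ (fun ω => ((X ω, Y ω), Z ω)) hmem Q fun v _ => hQ v).trans ?_
  rw [sum_product]
  calc ∑ xy ∈ univ.image (fun ω => (X ω, Y ω)), ∑ z ∈ univ.image Z, Q (xy, z)
      = ∑ xy ∈ univ.image (fun ω => (X ω, Y ω)), pr μ (fun ω => X ω = xy.1 ∧ Y ω = xy.2)
          / pr μ (fun ω => Y ω = xy.2) * pr μ (fun ω => Y ω = xy.2) := by
        refine sum_congr rfl fun xy _ => ?_
        simp only [Q, mul_div_right_comm _ (pr μ _), ← mul_sum]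
        rw [sum_pr_and μ _ Z fun ω _ => mem_image_of_mem Z (mem_univ ω)]
    _ ≤ ∑ xy ∈ univ.image (fun ω => (X ω, Y ω)), pr μ (fun ω => (X ω, Y ω) = xy) := by
        refine sum_le_sum fun xy _ => ?_
        rw [div_mul_cancel_of_imp fun h => le_antisymm
          ((pr_mono μ fun ω h => h.2).trans h.le) (pr_nonneg μ _)]
        exact pr_mono μ fun ω h => Prod.ext h.1 h.2
    _ = 1 := by
        simpa [μ.sum_one] using sum_pr_mul μ (fun ω => (X ω, Y ω))
          (fun ω _ => mem_image_of_mem _ (mem_univ ω)) fun _ => 1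

theorem condEntropy_le_add {S T T' : Type*} (X : Ω → S) (Y : Ω → T) (Z : Ω → T') :
    condEntropy μ X Z ≤ condEntropy μ X Y + condEntropy μ Y Z := by
  simp only [condEntropy_eq_sum]
  set t : Ω → ℝ := fun ω => pr μ (fun ω' => X ω' = X ω ∧ Y ω' = Y ω)
      * pr μ (fun ω' => Y ω' = Y ω ∧ Z ω' = Z ω)
      / (pr μ (fun ω' => X ω' = X ω ∧ Z ω' = Z ω) * pr μ (fun ω' => Y ω' = Y ω))
  have hpos : ∀ ω, 0 < μ.p ω → 0 < pr μ (fun ω' => X ω' = X ω ∧ Y ω' = Y ω)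
      ∧ 0 < pr μ (fun ω' => Y ω' = Y ω ∧ Z ω' = Z ω)
      ∧ 0 < pr μ (fun ω' => X ω' = X ω ∧ Z ω' = Z ω)
      ∧ 0 < pr μ (fun ω' => Y ω' = Y ω) ∧ 0 < pr μ (fun ω' => Z ω' = Z ω) := fun ω h0 =>
    ⟨pr_pos μ h0 ⟨rfl, rfl⟩, pr_pos μ h0 ⟨rfl, rfl⟩, pr_pos μ h0 ⟨rfl, rfl⟩, pr_pos μ h0 rfl,
      pr_pos μ h0 rfl⟩
  have hsplit : ∀ ω, μ.p ω * Real.logb 2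
        (pr μ (fun ω' => Z ω' = Z ω) / pr μ (fun ω' => X ω' = X ω ∧ Z ω' = Z ω))
      = μ.p ω * Real.logb 2
          (pr μ (fun ω' => Y ω' = Y ω) / pr μ (fun ω' => X ω' = X ω ∧ Y ω' = Y ω))
        + μ.p ω * Real.logb 2
          (pr μ (fun ω' => Z ω' = Z ω) / pr μ (fun ω' => Y ω' = Y ω ∧ Z ω' = Z ω))
        + μ.p ω * Real.logb 2 (t ω) := by
    intro ω
    rcases (μ.nonneg ω).eq_or_lt with h0 | h0
    · simp [← h0]
    obtain ⟨h1, h2, h3, h4, h5⟩ := hpos ω h0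
    rw [← mul_add, ← mul_add, ← Real.logb_mul (by positivity) (by positivity),
      ← Real.logb_mul (by positivity) (by positivity)]
    congr 2
    simp only [t]
    field_simp
  have ht : ∑ ω, μ.p ω * Real.logb 2 (t ω) ≤ 0 := by
    refine sum_mul_logb_nonpos μ t (fun ω h0 => ?_) (sum_mul_pr_ratio_le_one μ X Y Z)
    obtain ⟨h1, h2, h3, h4, -⟩ := hpos ω h0
    positivity
  rw [sum_congr rfl fun ω _ => hsplit ω, sum_add_distrib, sum_add_distrib]
  linarith

end ConditionalEntropy

lemma exists_ofFn_eq {A : Type*} {n : ℕ} (y : List A) (hy : y.length = n) :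
    ∃ v : Fin n → A, List.ofFn v = y := by
  subst hy
  exact ⟨y.get, List.ofFn_get y⟩

def listsOfLength (B : Type*) [Fintype B] (n : ℕ) : Finset (List B) :=
  (univ : Finset (Fin n → B)).image List.ofFn

section Words

variable {B : Type*} [Fintype B]

lemma mem_listsOfLength {n : ℕ} {z : List B} : z ∈ listsOfLength B n ↔ z.length = n := by
  refine ⟨fun h => ?_, fun h => ?_⟩
  · obtain ⟨w, -, rfl⟩ := mem_image.1 h
    exact List.length_ofFn
  · obtain ⟨w, rfl⟩ := exists_ofFn_eq z h
    exact mem_image_of_mem _ (mem_univ w)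

lemma sum_listsOfLength {n : ℕ} (F : List B → ℝ) :
    ∑ z ∈ listsOfLength B n, F z = ∑ w : Fin n → B, F (List.ofFn w) :=
  sum_image fun _ _ _ _ h => List.ofFn_injective h

lemma sum_prod_mul_logb_prod {ι : Type*} [Fintype ι] [DecidableEq ι] (q : ι → B → ℝ)
    (hq1 : ∀ i, ∑ b, q i b = 1) :
    ∑ w : ι → B, (∏ i, q i (w i)) * Real.logb 2 (∏ i, q i (w i))
      = ∑ i, ∑ b, q i b * Real.logb 2 (q i b) := by
  have hlog : ∀ w : ι → B, (∏ i, q i (w i)) * Real.logb 2 (∏ i, q i (w i))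
      = ∑ i, (∏ j, q j (w j)) * Real.logb 2 (q i (w i)) := by
    intro w
    by_cases hw : ∀ i ∈ univ, q i (w i) ≠ 0
    · rw [Real.logb_prod _ _ hw, mul_sum]
    · push Not at hw
      obtain ⟨i, -, hi⟩ := hw
      simp [prod_eq_zero (f := fun j => q j (w j)) (mem_univ i) hi]
  rw [sum_congr rfl fun w _ => hlog w, sum_comm]
  refine sum_congr rfl fun i _ => ?_
  have hfactor : ∀ w : ι → B, (∏ j, q j (w j)) * Real.logb 2 (q i (w i))
      = ∏ j, q j (w j) * (if j = i then Real.logb 2 (q j (w j)) else 1) := by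
    intro w
    rw [prod_mul_distrib, Fintype.prod_ite_eq']
  rw [sum_congr rfl fun w _ => hfactor w,
    ← Fintype.prod_sum fun j b => q j b * (if j = i then Real.logb 2 (q j b) else 1)]
  have hrow : ∀ j, ∑ b, q j b * (if j = i then Real.logb 2 (q j b) else 1)
      = if j = i then ∑ b, q j b * Real.logb 2 (q j b) else 1 := by
    intro j
    split_ifs <;> simp [hq1]
  rw [prod_congr rfl fun j _ => hrow j, Fintype.prod_ite_eq']

end Words

section ListKernel

variable {A B : Type*} (K : A → B → ℝ)

def listKernel : List A → List B → ℝ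
  | [], [] => 1
  | a :: y, b :: z => K a b * listKernel y z
  | _, _ => 0

lemma listKernel_ofFn {n : ℕ} (v : Fin n → A) (w : Fin n → B) :
    listKernel K (List.ofFn v) (List.ofFn w) = ∏ i, K (v i) (w i) := by
  induction n with
  | zero => simp [listKernel]
  | succ n ih => simp [List.ofFn_succ, listKernel, ih, Fin.prod_univ_succ]

lemma listKernel_nonneg (hK0 : ∀ a b, 0 ≤ K a b) (y : List A) (z : List B) :
    0 ≤ listKernel K y z := by
  induction y generalizing z with
  | nil => cases z <;> simp [listKernel]
  | cons a y ih => cases z <;> simp [listKernel, mul_nonneg (hK0 _ _) (ih _)]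

lemma length_eq_of_listKernel_ne_zero {y : List A} {z : List B} (h : listKernel K y z ≠ 0) :
    y.length = z.length := by
  induction y generalizing z with
  | nil => cases z <;> simp_all [listKernel]
  | cons a y ih =>
    cases z with
    | nil => simp [listKernel] at h
    | cons b z => simpa using ih (right_ne_zero_of_mul h)

lemma neg_sum_listKernel_mul_logb_le [Fintype B] (hK1 : ∀ a, ∑ b, K a b = 1) {h : ℝ}
    (hh : ∀ a, -∑ b, K a b * Real.logb 2 (K a b) ≤ h) {n : ℕ} (y : List A)
    (hy : y.length = n) :
    -∑ z ∈ listsOfLength B n, listKernel K y z * Real.logb 2 (listKernel K y z) ≤ n * h := by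
  obtain ⟨v, rfl⟩ := exists_ofFn_eq y hy
  simp only [sum_listsOfLength, listKernel_ofFn]
  rw [sum_prod_mul_logb_prod (fun i => K (v i)) fun i => hK1 (v i), ← sum_neg_distrib]
  simpa using sum_le_sum fun i (_ : i ∈ univ) => hh (v i)

lemma sum_listKernel_le [Fintype A] (hK0 : ∀ a b, 0 ≤ K a b) (s : Finset (List A))
    (z : List B) :
    ∑ y ∈ s, listKernel K y z ≤ ∑ y ∈ listsOfLength A z.length, listKernel K y z := by
  rw [← sum_filter_of_ne fun y _ h => length_eq_of_listKernel_ne_zero K h]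
  exact sum_le_sum_of_subset_of_nonneg (fun y hy => mem_listsOfLength.2 (mem_filter.1 hy).2)
    fun y _ _ => listKernel_nonneg K hK0 y z

lemma sum_listKernel_mul_sum_listKernel_le [Fintype A] [Fintype B] (hK0 : ∀ a b, 0 ≤ K a b)
    {C : ℝ} (hC : ∀ a, ∑ b, K a b * ∑ a', K a' b ≤ C) {n : ℕ} (y : List A)
    (hy : y.length = n) :
    ∑ z ∈ listsOfLength B n, listKernel K y z * ∑ y' ∈ listsOfLength A n, listKernel K y' z
      ≤ C ^ n := by
  obtain ⟨v, rfl⟩ := exists_ofFn_eq y hy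
  simp only [sum_listsOfLength, listKernel_ofFn]
  have hcol : ∀ w : Fin n → B, (∏ i, K (v i) (w i)) * ∑ u : Fin n → A, ∏ i, K (u i) (w i)
      = ∏ i, K (v i) (w i) * ∑ a, K a (w i) := by
    intro w
    rw [← Fintype.prod_sum fun i a => K a (w i), ← prod_mul_distrib]
  rw [sum_congr rfl fun w _ => hcol w, ← Fintype.prod_sum fun i b => K (v i) b * ∑ a, K a b]
  calc ∏ i, ∑ b, K (v i) b * ∑ a, K a b ≤ ∏ _i : Fin n, C :=
        prod_le_prod (fun i _ => sum_nonneg fun b _ => mul_nonneg (hK0 _ _)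
          (sum_nonneg fun a _ => hK0 _ _)) fun i _ => hC (v i)
    _ = C ^ n := by simp

end ListKernel

section Channel

variable {A B : Type*} (K : A → B → ℝ)

def IsMemorylessChannel (μ : FinProb Ω) (Y : Ω → List A) (Y' : Ω → List B) : Prop :=
  ∀ y z, pr μ (fun ω => Y' ω = z ∧ Y ω = y) = pr μ (fun ω => Y ω = y) * listKernel K y z

lemma isMemorylessChannel_of_cond {S : Type*} (μ : FinProb Ω) (X : Ω → S) (Y : Ω → List A)
    (Y' : Ω → List B) (hlen : ∀ ω, (Y' ω).length = (Y ω).length)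
    (hcond : ∀ (x : S) (n : ℕ) (y : Fin n → A) (y' : Fin n → B),
      0 < pr μ (fun ω => X ω = x ∧ Y ω = List.ofFn y) →
      pr μ (fun ω => Y' ω = List.ofFn y' ∧ X ω = x ∧ Y ω = List.ofFn y) /
        pr μ (fun ω => X ω = x ∧ Y ω = List.ofFn y) = ∏ i, K (y i) (y' i)) :
    IsMemorylessChannel K μ Y Y' := by
  intro y z
  by_cases hl : z.length = y.length
  swap
  · rw [pr_eq_zero μ fun ω (h : Y' ω = z ∧ Y ω = y) => hl (h.1 ▸ h.2 ▸ hlen ω),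
      not_imp_comm.1 (length_eq_of_listKernel_ne_zero K) (Ne.symm hl), mul_zero]
  obtain ⟨n, v, rfl⟩ : ∃ n, ∃ v : Fin n → A, List.ofFn v = y := ⟨_, exists_ofFn_eq y rfl⟩
  obtain ⟨w, rfl⟩ := exists_ofFn_eq z (hl.trans List.length_ofFn)
  have hx : ∀ x, pr μ (fun ω => Y' ω = List.ofFn w ∧ X ω = x ∧ Y ω = List.ofFn v)
      = pr μ (fun ω => X ω = x ∧ Y ω = List.ofFn v) * ∏ i, K (v i) (w i) := by
    intro x
    rcases (pr_nonneg μ (fun ω => X ω = x ∧ Y ω = List.ofFn v)).eq_or_lt with h0 | h0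
    · rw [← h0, zero_mul]
      exact le_antisymm ((pr_mono μ fun ω h => h.2).trans h0.ge) (pr_nonneg μ _)
    · rw [← hcond x n v w h0, mul_div_cancel₀ _ h0.ne']
  have hX : ∀ ω, 0 < μ.p ω → X ω ∈ univ.image X := fun ω _ => mem_image_of_mem X (mem_univ ω)
  rw [listKernel_ofFn, ← sum_pr_and μ _ X hX, ← sum_pr_and μ _ X hX, sum_mul]
  refine sum_congr rfl fun x _ => ?_
  rw [pr_congr μ (E := fun ω => Y ω = List.ofFn v ∧ X ω = x) fun ω => and_comm, ← hx]
  exact pr_congr μ fun ω => by tauto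

variable [Fintype B] {K} {μ : FinProb Ω} {Y : Ω → List A} {Y' : Ω → List B}

lemma sum_mul_eq_sum_mul_sum_listKernel (hchan : IsMemorylessChannel K μ Y Y')
    (f : List A → List B → ℝ) :
    ∑ ω, μ.p ω * f (Y ω) (Y' ω)
      = ∑ ω, μ.p ω * ∑ z ∈ listsOfLength B (Y ω).length, listKernel K (Y ω) z * f (Y ω) z := by
  have hsupp : ∀ ω, 0 < μ.p ω →
      Y ω ∈ univ.image Y ∧ Y' ω ∈ listsOfLength B (Y ω).length := by
    intro ω h0
    refine ⟨mem_image_of_mem Y (mem_univ ω), mem_listsOfLength.2 ?_⟩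
    have hpos := pr_pos μ h0 (E := fun ω' => Y' ω' = Y' ω ∧ Y ω' = Y ω) ⟨rfl, rfl⟩
    rw [hchan] at hpos
    exact (length_eq_of_listKernel_ne_zero K (pos_of_mul_pos_right hpos
      (pr_nonneg μ _)).ne').symm
  rw [← sum_sum_pr_mul μ Y Y' (t := fun y => listsOfLength B y.length) hsupp f,
    ← sum_pr_mul μ Y (fun ω h => (hsupp ω h).1)
      fun y => ∑ z ∈ listsOfLength B y.length, listKernel K y z * f y z]
  simp only [hchan _ _, mul_assoc, mul_sum]

lemma sum_mul_neg_logb_listKernel_le (hchan : IsMemorylessChannel K μ Y Y')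
    (hK1 : ∀ a, ∑ b, K a b = 1) {h : ℝ} (hh : ∀ a, -∑ b, K a b * Real.logb 2 (K a b) ≤ h) :
    ∑ ω, μ.p ω * -Real.logb 2 (listKernel K (Y ω) (Y' ω)) ≤ expLen μ Y * h := by
  rw [sum_mul_eq_sum_mul_sum_listKernel hchan fun y z => -Real.logb 2 (listKernel K y z),
    expLen, sum_mul]
  refine sum_le_sum fun ω _ => ?_
  rw [mul_assoc]
  refine mul_le_mul_of_nonneg_left ?_ (μ.nonneg ω)
  simpa [mul_neg, sum_neg_distrib] using neg_sum_listKernel_mul_logb_le K hK1 hh (Y ω) rfl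

variable [Fintype A]

lemma sum_mul_sum_listKernel_div_pow_le_one (hchan : IsMemorylessChannel K μ Y Y')
    (hK0 : ∀ a b, 0 ≤ K a b) {C : ℝ} (hC0 : 0 < C) (hC : ∀ a, ∑ b, K a b * ∑ a', K a' b ≤ C) :
    ∑ ω, μ.p ω * ((∑ y ∈ listsOfLength A (Y' ω).length, listKernel K y (Y' ω))
      / C ^ (Y' ω).length) ≤ 1 := by
  rw [sum_mul_eq_sum_mul_sum_listKernel hchan fun _ z =>
    (∑ y ∈ listsOfLength A z.length, listKernel K y z) / C ^ z.length]
  calc ∑ ω, μ.p ω * ∑ z ∈ listsOfLength B (Y ω).length, listKernel K (Y ω) z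
        * ((∑ y ∈ listsOfLength A z.length, listKernel K y z) / C ^ z.length)
      ≤ ∑ ω, μ.p ω * 1 := by
        refine sum_le_sum fun ω _ => mul_le_mul_of_nonneg_left ?_ (μ.nonneg ω)
        have hlen : ∀ z ∈ listsOfLength B (Y ω).length, listKernel K (Y ω) z
            * ((∑ y ∈ listsOfLength A z.length, listKernel K y z) / C ^ z.length)
            = listKernel K (Y ω) z * (∑ y ∈ listsOfLength A (Y ω).length, listKernel K y z)
              / C ^ (Y ω).length := by
          intro z hz
          rw [mem_listsOfLength.1 hz, mul_div_assoc]
        rw [sum_congr rfl hlen, ← sum_div, div_le_one (pow_pos hC0 _)]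
        exact sum_listKernel_mul_sum_listKernel_le K hK0 hC (Y ω) rfl
    _ = 1 := by simp [μ.sum_one]

lemma sum_mul_pr_div_pr_le_one (hchan : IsMemorylessChannel K μ Y Y')
    (hK0 : ∀ a b, 0 ≤ K a b) {C : ℝ} (hC0 : 0 < C) (hC : ∀ a, ∑ b, K a b * ∑ a', K a' b ≤ C) :
    ∑ ω, μ.p ω * (pr μ (fun ω' => Y' ω' = Y' ω)
      / (pr μ (fun ω' => Y ω' = Y ω) * C ^ (Y ω).length)) ≤ 1 := by
  set Q : List A × List B → ℝ := fun v =>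
    pr μ (fun ω => Y' ω = v.2) * (listKernel K v.1 v.2 / C ^ v.2.length)
  have hQ : ∀ v, 0 ≤ Q v := fun v => mul_nonneg (pr_nonneg μ _)
    (div_nonneg (listKernel_nonneg K hK0 _ _) (pow_pos hC0 _).le)
  have hterm : ∀ ω, μ.p ω * (pr μ (fun ω' => Y' ω' = Y' ω)
      / (pr μ (fun ω' => Y ω' = Y ω) * C ^ (Y ω).length))
      = μ.p ω * (Q (Y ω, Y' ω) / pr μ (fun ω' => (Y ω', Y' ω') = (Y ω, Y' ω))) := by
    intro ω
    rcases (μ.nonneg ω).eq_or_lt with h0 | h0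
    · simp [← h0]
    have hpair : pr μ (fun ω' => (Y ω', Y' ω') = (Y ω, Y' ω))
        = pr μ (fun ω' => Y ω' = Y ω) * listKernel K (Y ω) (Y' ω) := by
      rw [← hchan]
      exact pr_congr μ fun ω' => by rw [Prod.ext_iff, and_comm]
    have hpos := pr_pos μ h0 (E := fun ω' => (Y ω', Y' ω') = (Y ω, Y' ω)) rfl
    rw [hpair] at hpos ⊢
    have hY := pr_pos μ h0 (E := fun ω' => Y ω' = Y ω) rfl
    have hk : listKernel K (Y ω) (Y' ω) ≠ 0 := (pos_of_mul_pos_right hpos hY.le).ne'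
    simp only [Q, ← length_eq_of_listKernel_ne_zero K hk]
    field_simp
  rw [sum_congr rfl fun ω _ => hterm ω]
  refine (sum_mul_div_pr_le μ (fun ω => (Y ω, Y' ω)) (s := univ.image Y ×ˢ univ.image Y')
    (fun ω _ => mem_product.2 ⟨mem_image_of_mem _ (mem_univ ω), mem_image_of_mem _ (mem_univ ω)⟩)
    Q fun v _ => hQ v).trans ?_
  rw [sum_product_right]
  calc ∑ z ∈ univ.image Y', ∑ y ∈ univ.image Y, Q (y, z)
      ≤ ∑ z ∈ univ.image Y', pr μ (fun ω => Y' ω = z)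
          * ((∑ y ∈ listsOfLength A z.length, listKernel K y z) / C ^ z.length) := by
        refine sum_le_sum fun z _ => ?_
        simp only [Q, ← mul_sum, ← sum_div]
        exact mul_le_mul_of_nonneg_left (div_le_div_of_nonneg_right
          (sum_listKernel_le K hK0 _ z) (pow_pos hC0 _).le) (pr_nonneg μ _)
    _ = ∑ ω, μ.p ω * ((∑ y ∈ listsOfLength A (Y' ω).length, listKernel K y (Y' ω))
          / C ^ (Y' ω).length) :=
        sum_pr_mul μ Y' (fun ω _ => mem_image_of_mem _ (mem_univ ω)) _
    _ ≤ 1 := sum_mul_sum_listKernel_div_pow_le_one hchan hK0 hC0 hC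

theorem condEntropy_le_expLen_mul (hchan : IsMemorylessChannel K μ Y Y')
    (hK0 : ∀ a b, 0 ≤ K a b) (hK1 : ∀ a, ∑ b, K a b = 1) {h : ℝ}
    (hh : ∀ a, -∑ b, K a b * Real.logb 2 (K a b) ≤ h) {C : ℝ} (hC0 : 0 < C)
    (hC : ∀ a, ∑ b, K a b * ∑ a', K a' b ≤ C) :
    condEntropy μ Y Y' ≤ expLen μ Y * (h + Real.logb 2 C) := by
  set g : Ω → ℝ := fun ω => pr μ (fun ω' => Y' ω' = Y' ω)
    / (pr μ (fun ω' => Y ω' = Y ω) * C ^ (Y ω).length)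
  have hsplit : ∀ ω, μ.p ω * Real.logb 2 (pr μ (fun ω' => Y' ω' = Y' ω)
        / pr μ (fun ω' => Y ω' = Y ω ∧ Y' ω' = Y' ω))
      = μ.p ω * -Real.logb 2 (listKernel K (Y ω) (Y' ω))
        + μ.p ω * (Y ω).length * Real.logb 2 C + μ.p ω * Real.logb 2 (g ω) := by
    intro ω
    rcases (μ.nonneg ω).eq_or_lt with h0 | h0
    · simp [← h0]
    have hjoint : pr μ (fun ω' => Y ω' = Y ω ∧ Y' ω' = Y' ω)
        = pr μ (fun ω' => Y ω' = Y ω) * listKernel K (Y ω) (Y' ω) := by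
      rw [← hchan]
      exact pr_congr μ fun ω' => and_comm
    have hpos := pr_pos μ h0 (E := fun ω' => Y ω' = Y ω ∧ Y' ω' = Y' ω) ⟨rfl, rfl⟩
    rw [hjoint] at hpos ⊢
    have hY := pr_pos μ h0 (E := fun ω' => Y ω' = Y ω) rfl
    have hY' := pr_pos μ h0 (E := fun ω' => Y' ω' = Y' ω) rfl
    have hk : listKernel K (Y ω) (Y' ω) ≠ 0 := (pos_of_mul_pos_right hpos hY.le).ne'
    have hCn : C ^ (Y ω).length ≠ 0 := (pow_pos hC0 _).ne'
    simp only [g]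
    rw [Real.logb_div hY'.ne' (mul_ne_zero hY.ne' hk), Real.logb_mul hY.ne' hk,
      Real.logb_div hY'.ne' (mul_ne_zero hY.ne' hCn), Real.logb_mul hY.ne' hCn, Real.logb_pow]
    ring
  have hg : ∑ ω, μ.p ω * Real.logb 2 (g ω) ≤ 0 :=
    sum_mul_logb_nonpos μ g (fun ω h0 => div_pos (pr_pos μ h0 rfl)
      (mul_pos (pr_pos μ h0 rfl) (pow_pos hC0 _))) (sum_mul_pr_div_pr_le_one hchan hK0 hC0 hC)
  have hent := sum_mul_neg_logb_listKernel_le hchan hK1 hh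
  rw [condEntropy_eq_sum, sum_congr rfl fun ω _ => hsplit ω, sum_add_distrib, sum_add_distrib,
    ← sum_mul, mul_add, expLen]
  rw [expLen] at hent
  linarith

end Channel

section SubErsKernel

variable {ps pe : ℝ}

lemma subErsKernel_nonneg (hps : 0 ≤ ps) (hpe : 0 ≤ pe) (hspe : ps + pe ≤ 1) (b : Bool)
    (c : Option Bool) : 0 ≤ subErsKernel ps pe b c := by
  rcases c with _ | c
  · exact hpe
  · simp only [subErsKernel]
    split_ifs <;> linarith

variable (ps pe)

lemma sum_subErsKernel (b : Bool) : ∑ c, subErsKernel ps pe b c = 1 := by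
  cases b <;> simp [Fintype.sum_option, subErsKernel] <;> ring

lemma neg_sum_subErsKernel_mul_logb (b : Bool) :
    -∑ c, subErsKernel ps pe b c * Real.logb 2 (subErsKernel ps pe b c)
      = -(ps * Real.logb 2 ps) - pe * Real.logb 2 pe
        - (1 - ps - pe) * Real.logb 2 (1 - ps - pe) := by
  cases b <;> simp [Fintype.sum_option, subErsKernel] <;> ring

lemma sum_subErsKernel_mul_sum (b : Bool) :
    ∑ c, subErsKernel ps pe b c * ∑ b', subErsKernel ps pe b' c = (1 - pe) ^ 2 + 2 * pe ^ 2 := by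
  cases b <;> simp [Fintype.sum_option, subErsKernel] <;> ring

end SubErsKernel

/-- for the substitution/erasure kernel,
`I(X;Y⁽³⁾) ≥ I(X;Y) − E[|Y|]·[H(ps, pe, 1−ps−pe) + log₂((1−pe)² + 2pe²)]`. -/
theorem stmt11 {Ω S : Type*} [Fintype Ω] (μ : FinProb Ω)
    (ps pe : ℝ) (hps : 0 ≤ ps) (hpe : 0 ≤ pe) (hspe : ps + pe ≤ 1)
    (X : Ω → S) (Y : Ω → List Bool) (Y3 : Ω → List (Option Bool))
    (hlen : ∀ ω, (Y3 ω).length = (Y ω).length)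
    (hcond : ∀ (x : S) (n : ℕ) (y : Fin n → Bool) (y' : Fin n → Option Bool),
      0 < pr μ (fun ω => X ω = x ∧ Y ω = List.ofFn y) →
      pr μ (fun ω => Y3 ω = List.ofFn y' ∧ X ω = x ∧ Y ω = List.ofFn y) /
        pr μ (fun ω => X ω = x ∧ Y ω = List.ofFn y) = ∏ i, subErsKernel ps pe (y i) (y' i)) :
    mutualInfo μ X Y3 ≥ mutualInfo μ X Y -
      expLen μ Y * ((-(ps * Real.logb 2 ps) - pe * Real.logb 2 pe -
          (1 - ps - pe) * Real.logb 2 (1 - ps - pe)) +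
        Real.logb 2 ((1 - pe) ^ 2 + 2 * pe ^ 2)) := by
  have hchain := condEntropy_le_add μ X Y Y3
  have hchannel := condEntropy_le_expLen_mul
    (isMemorylessChannel_of_cond _ μ X Y Y3 hlen hcond) (subErsKernel_nonneg hps hpe hspe)
    (sum_subErsKernel ps pe) (fun b => (neg_sum_subErsKernel_mul_logb ps pe b).le)
    (by nlinarith [sq_nonneg (3 * pe - 1)]) (fun b => (sum_subErsKernel_mul_sum ps pe b).le)
  rw [mutualInfo, mutualInfo]
  linarith

end
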